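/- Let (N, m0, l, A) be a bounded labeled Petri net system whose label alphabet is partitioned as A = A_L ∪ A_H, such that the T_H-induced subnet is acyclic, and let G be the basis reachability graph of (N, m0, l, A) with the low-level transitions T_L playing the role of explicit transitions and the high-level transitions T_H the role of implicit transitions. Then the LPNS is SNNI if and only if l(φ(L(G))) = l_L(L(N_L, m0)). -/
import Mathlib


open scoped BigOperators

/-- A Petri net on places `P` and transitions `T`, given by its `Pre` and `Post` matrices. -/
structure PetriNet (P T : Type) where
  Pre : P → T → ℕ
  Post : P → T → ℕ

namespace PetriNet

variable {P T A : Type}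

/-- Incidence matrix `[N] = Post - Pre` (with values in ℤ). -/
def inc (N : PetriNet P T) (p : P) (t : T) : ℤ :=
  (N.Post p t : ℤ) - (N.Pre p t : ℤ)

/-- Transition `t` is enabled at marking `m`. -/
def enabled (N : PetriNet P T) (m : P → ℕ) (t : T) : Prop :=
  ∀ p, N.Pre p t ≤ m p

/-- Marking obtained by firing `t` at `m`. -/
def fire (N : PetriNet P T) (m : P → ℕ) (t : T) : P → ℕ :=
  fun p => m p - N.Pre p t + N.Post p t

/-- `FireSeq N m s m'` means the sequence `s` is enabled at `m` and its firing yields `m'`,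
written `m[s⟩m'`. -/
inductive FireSeq (N : PetriNet P T) : (P → ℕ) → List T → (P → ℕ) → Prop
  | nil (m : P → ℕ) : FireSeq N m [] m
  | cons {m m' : P → ℕ} {t : T} {s : List T} :
      N.enabled m t → FireSeq N (N.fire m t) s m' → FireSeq N m (t :: s) m'

/-- `L(N, m0)`: the set of firing sequences enabled at `m0`. -/
def lang (N : PetriNet P T) (m0 : P → ℕ) : Set (List T) :=
  {s | ∃ m', N.FireSeq m0 s m'}

/-- `R(N, m0)`: the set of markings reachable from `m0`. -/
def reach (N : PetriNet P T) (m0 : P → ℕ) : Set (P → ℕ) :=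
  {m | ∃ s, N.FireSeq m0 s m}

/-- A Petri net system is bounded if reachable markings are uniformly bounded. -/
def Bounded (N : PetriNet P T) (m0 : P → ℕ) : Prop :=
  ∃ k : ℕ, ∀ m ∈ N.reach m0, ∀ p, m p ≤ k

/-- The `TL`-induced subnet: same places, transitions restricted to `TL`. -/
def restrict (N : PetriNet P T) (TL : Set T) : PetriNet P {t // t ∈ TL} where
  Pre := fun p t => N.Pre p t.1
  Post := fun p t => N.Post p t.1

/-- Parikh vector of a sequence. -/
def parikh [DecidableEq T] (s : List T) : T → ℕ := fun t => s.count t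

/-- Projection of a sequence onto a subset `TL` of transitions (erasing the others). -/
def projSeq (TL : Set T) [DecidablePred (· ∈ TL)] (s : List T) : List T :=
  s.filter (fun t => decide (t ∈ TL))

/-- Σ(m,t): explanations of `t` at `m`, i.e. sequences of implicit (`TI`) transitions whose
firing at `m` enables `t`. -/
def explanations (N : PetriNet P T) (TI : Set T) (m : P → ℕ) (t : T) : Set (List T) :=
  {s | (∀ u ∈ s, u ∈ TI) ∧ ∃ m', N.FireSeq m s m' ∧ N.enabled m' t}

/-- Y(m,t): e-vectors, Parikh vectors of explanations. -/
def eVectors [DecidableEq T] (N : PetriNet P T) (TI : Set T) (m : P → ℕ) (t : T) :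
    Set (T → ℕ) :=
  parikh '' N.explanations TI m t

/-- Y_min(m,t): componentwise-minimal e-vectors. -/
def eVectorsMin [DecidableEq T] (N : PetriNet P T) (TI : Set T) (m : P → ℕ) (t : T) :
    Set (T → ℕ) :=
  {y ∈ N.eVectors TI m t | ∀ y' ∈ N.eVectors TI m t, y' ≤ y → y' = y}

/-- Σ_min(m,t): explanations with no explanation of strictly smaller Parikh vector. -/
def explanationsMin [DecidableEq T] (N : PetriNet P T) (TI : Set T) (m : P → ℕ) (t : T) :
    Set (List T) :=
  {s ∈ N.explanations TI m t |
    ¬ ∃ s' ∈ N.explanations TI m t, parikh s' ≤ parikh s ∧ parikh s' ≠ parikh s}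

/-- Paths of the basis reachability graph: `(m,(t,y),m')` is an arc whenever `t ∈ TE`,
`y ∈ Y_min(m,t)` and `m' = m + [N]_I·y + [N](·,t)` (the vector `y` is supported on `TI`,
so the sum over all transitions equals the sum over `TI`). -/
inductive BrgPath [DecidableEq T] [Fintype T] (N : PetriNet P T) (TE TI : Set T) :
    (P → ℕ) → List (T × (T → ℕ)) → (P → ℕ) → Prop
  | nil (m : P → ℕ) : BrgPath N TE TI m [] m
  | cons {m m' m'' : P → ℕ} {t : T} {y : T → ℕ} {σ : List (T × (T → ℕ))} :
      t ∈ TE → y ∈ N.eVectorsMin TI m t →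
      (∀ p, (m' p : ℤ) = (m p : ℤ) + (∑ u, (y u : ℤ) * N.inc p u) + N.inc p t) →
      BrgPath N TE TI m' σ m'' → BrgPath N TE TI m ((t, y) :: σ) m''

/-- `L(G)`: the language of the basis reachability graph. -/
def brgLang [DecidableEq T] [Fintype T] (N : PetriNet P T) (TE TI : Set T) (m0 : P → ℕ) :
    Set (List (T × (T → ℕ))) :=
  {σ | ∃ m', BrgPath N TE TI m0 σ m'}

/-- The set of basis markings: states of the BRG reachable from `m0`. -/
def brgStates [DecidableEq T] [Fintype T] (N : PetriNet P T) (TE TI : Set T) (m0 : P → ℕ) :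
    Set (P → ℕ) :=
  {m | ∃ σ, BrgPath N TE TI m0 σ m}

/-- φ(σ): concatenation of the first entries of the arcs of σ. -/
def phi (σ : List (T × (T → ℕ))) : List T := σ.map Prod.fst

/-- φ'(σ): sum of the second entries of the arcs of σ. -/
def phi' (σ : List (T × (T → ℕ))) : T → ℕ := (σ.map Prod.snd).sum

/-- Arcs of the directed bipartite graph of the `TI`-induced subnet on `P ⊕ T`. -/
def subnetArc (N : PetriNet P T) (TI : Set T) : (P ⊕ T) → (P ⊕ T) → Prop
  | Sum.inl p, Sum.inr t => t ∈ TI ∧ 0 < N.Pre p t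
  | Sum.inr t, Sum.inl p => t ∈ TI ∧ 0 < N.Post p t
  | _, _ => False

/-- The `TI`-induced subnet is acyclic: no cycle in its directed bipartite graph. -/
def SubnetAcyclic (N : PetriNet P T) (TI : Set T) : Prop :=
  ∀ x : P ⊕ T, ¬ Relation.TransGen (N.subnetArc TI) x x

/-- `L(N_L, m0)` viewed as a set of sequences over `T` (via the inclusion `T_L ↪ T`). -/
def lowLang (N : PetriNet P T) (TL : Set T) (m0 : P → ℕ) : Set (List T) :=
  (fun s => s.map Subtype.val) '' (N.restrict TL).lang m0

/-- `l_L(L(N_L, m0))`: the label language of the low-level subnet system. -/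
def lowLabelLang (N : PetriNet P T) (l : T → A) (TL : Set T) (m0 : P → ℕ) : Set (List A) :=
  (fun s => s.map fun t => l t.1) '' (N.restrict TL).lang m0

/-- SNNI: `l(P_L(L(N,m0))) = l_L(L(N_L,m0))`, where `T_L = {t | l t ∈ A_L}`. -/
def SNNI (N : PetriNet P T) (m0 : P → ℕ) (l : T → A) (AL : Set A)
    [DecidablePred fun t => l t ∈ AL] : Prop :=
  (fun s => (s.filter fun t => decide (l t ∈ AL)).map l) '' N.lang m0 =
    N.lowLabelLang l {t | l t ∈ AL} m0

end PetriNet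

namespace PetriNet

section Aux

variable {P T A : Type}

lemma fire_cast {N : PetriNet P T} {m : P → ℕ} {t : T} (h : N.enabled m t) (p : P) :
    ((N.fire m t p : ℤ)) = (m p : ℤ) + N.inc p t := by
  have hp := h p
  simp only [fire, inc]
  omega

lemma fireSeq_append {N : PetriNet P T} {m m' m'' : P → ℕ} {s s' : List T}
    (h : N.FireSeq m s m') (h' : N.FireSeq m' s' m'') : N.FireSeq m (s ++ s') m'' := by
  induction h with
  | nil m => exact h'
  | cons he _ ih => exact FireSeq.cons he (ih h')

lemma parikh_cons [DecidableEq T] (t : T) (s : List T) (u : T) :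
    parikh (t :: s) u = parikh s u + if u = t then 1 else 0 := by
  rcases eq_or_ne u t with h | h
  · subst h; simp [parikh]
  · simp [parikh, List.count_cons, h, Ne.symm h]

lemma sum_parikh_cons [DecidableEq T] [Fintype T] {N : PetriNet P T} (t : T) (s : List T)
    (p : P) :
    ∑ u, (parikh (t :: s) u : ℤ) * N.inc p u
      = (∑ u, (parikh s u : ℤ) * N.inc p u) + N.inc p t := by
  simp only [parikh_cons]
  push_cast
  simp [add_mul, Finset.sum_add_distrib, ite_mul, Finset.sum_ite_eq']

lemma fireSeq_stateEq [DecidableEq T] [Fintype T] {N : PetriNet P T} :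
    ∀ {m m' : P → ℕ} {s : List T}, N.FireSeq m s m' →
    ∀ p, (m' p : ℤ) = (m p : ℤ) + ∑ u, (parikh s u : ℤ) * N.inc p u := by
  intro m m' s h
  induction h with
  | nil m => simp [parikh]
  | @cons m m' t s he hs ih =>
      intro p
      rw [ih p, fire_cast he p, sum_parikh_cons]
      ring

/-- minimal element of a nonempty finset under a transitive irreflexive relation. -/
lemma exists_min_finset {α : Type} (R : α → α → Prop) (htrans : Transitive R)
    (hirr : ∀ a, ¬ R a a) (s : Finset α) :
    s.Nonempty → ∃ t ∈ s, ∀ u ∈ s, ¬ R u t := by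
  classical
  induction s using Finset.strongInduction with
  | _ s ih =>
    intro hne
    obtain ⟨t, ht⟩ := hne
    by_cases h : ∀ u ∈ s, ¬ R u t
    · exact ⟨t, ht, h⟩
    · push_neg at h
      obtain ⟨u, hu, hRu⟩ := h
      have hss : s.filter (fun v => R v t) ⊂ s := by
        refine ⟨Finset.filter_subset _ _, fun hsub => ?_⟩
        have := Finset.mem_filter.mp (hsub ht)
        exact hirr t this.2
      obtain ⟨t', ht', hmin⟩ := ih _ hss ⟨u, Finset.mem_filter.mpr ⟨hu, hRu⟩⟩
      have hRt : R t' t := (Finset.mem_filter.mp ht').2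
      refine ⟨t', Finset.filter_subset _ _ ht', fun v hv hRv => ?_⟩
      exact hmin v (Finset.mem_filter.mpr ⟨hv, htrans hRv hRt⟩) hRv

/-- minimal-below element of a set of vectors in ℕ^T. -/
lemma exists_min_le [Fintype T] {S : Set (T → ℕ)} :
    ∀ (n : ℕ) (x : T → ℕ), (∑ u, x u) = n → x ∈ S →
      ∃ y ∈ S, y ≤ x ∧ ∀ y' ∈ S, y' ≤ y → y' = y := by
  intro n
  induction n using Nat.strong_induction_on with
  | _ n ih =>
    intro x hsum hx
    by_cases hmin : ∀ y' ∈ S, y' ≤ x → y' = x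
    · exact ⟨x, hx, le_refl x, hmin⟩
    · push_neg at hmin
      obtain ⟨y', hy'S, hy'le, hy'ne⟩ := hmin
      have hlt : (∑ u, y' u) < n := by
        rw [← hsum]
        apply Finset.sum_lt_sum (fun u _ => hy'le u)
        by_contra hcon
        push_neg at hcon
        exact hy'ne (funext fun u => le_antisymm (hy'le u) (hcon u (Finset.mem_univ u)))
      obtain ⟨y, hyS, hyle, hymin⟩ := ih _ hlt y' rfl hy'S
      exact ⟨y, hyS, le_trans hyle hy'le, hymin⟩

/-- Key acyclicity lemma: in the acyclic `TI`-subnet, any nonnegative-result vector is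
fireable. -/
lemma acyclic_fireable [Fintype T] [DecidableEq T] {N : PetriNet P T} {TI : Set T}
    (hacyc : N.SubnetAcyclic TI) :
    ∀ (n : ℕ) (x : T → ℕ), (∑ u, x u) = n → (∀ u, x u ≠ 0 → u ∈ TI) →
    ∀ m : P → ℕ, (∀ p, 0 ≤ (m p : ℤ) + ∑ u, (x u : ℤ) * N.inc p u) →
    ∃ w m', (∀ u ∈ w, u ∈ TI) ∧ parikh w = x ∧ N.FireSeq m w m' := by
  intro n
  induction n using Nat.strong_induction_on with
  | _ n ih =>
    intro x hsum hsupp m hpos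
    rcases Nat.eq_zero_or_pos n with hn | hn
    · subst hn
      have hx0 : ∀ u, x u = 0 := by
        intro u
        exact Finset.sum_eq_zero_iff.mp hsum u (Finset.mem_univ u)
      exact ⟨[], m, by simp, funext fun u => by simp [parikh, hx0 u], FireSeq.nil m⟩
    · -- find a minimal transition in the support
      have hsne : (Finset.univ.filter (fun u => x u ≠ 0)).Nonempty := by
        by_contra hcon
        rw [Finset.not_nonempty_iff_eq_empty, Finset.filter_eq_empty_iff] at hcon
        have : (∑ u, x u) = 0 := Finset.sum_eq_zero (fun u hu => by
          have := hcon hu; simpa using this)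
        omega
      obtain ⟨t, htmem, htmin⟩ := exists_min_finset
        (fun u v => Relation.TransGen (N.subnetArc TI) (Sum.inr u) (Sum.inr v))
        (fun a b c hab hbc => hab.trans hbc)
        (fun a => hacyc (Sum.inr a)) _ hsne
      have hxt : x t ≠ 0 := (Finset.mem_filter.mp htmem).2
      have htTI : t ∈ TI := hsupp t hxt
      -- no transition in the support outputs into an input place of t
      have hkey : ∀ u, x u ≠ 0 → ∀ p, 0 < N.Pre p t → N.Post p u = 0 := by
        intro u hu p hpre
        by_contra hpost
        have hpost' : 0 < N.Post p u := Nat.pos_of_ne_zero hpost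
        have harc1 : N.subnetArc TI (Sum.inr u) (Sum.inl p) := ⟨hsupp u hu, hpost'⟩
        have harc2 : N.subnetArc TI (Sum.inl p) (Sum.inr t) := ⟨htTI, hpre⟩
        exact htmin u (Finset.mem_filter.mpr ⟨Finset.mem_univ u, hu⟩)
          ((Relation.TransGen.single harc1).trans (Relation.TransGen.single harc2))
      -- t is enabled at m
      have hen : N.enabled m t := by
        intro p
        rcases Nat.eq_zero_or_pos (N.Pre p t) with hpre | hpre
        · omega
        · have hbound : ∑ u, (x u : ℤ) * N.inc p u
              ≤ ∑ u, (if u = t then -((x t : ℤ) * N.Pre p t) else 0) := by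
            apply Finset.sum_le_sum
            intro u _
            by_cases hx : x u = 0
            · simp [hx]
              split <;> [skip; rfl]
              · rename_i h; subst h; exact absurd hx hxt
            · have hp0 : N.Post p u = 0 := hkey u hx p hpre
              have : N.inc p u = -(N.Pre p u : ℤ) := by simp [inc, hp0]
              rw [this]
              by_cases hut : u = t
              · subst hut; simp [mul_comm]
              · simp [hut]
                positivity
          rw [Finset.sum_ite_eq' Finset.univ t] at hbound
          simp at hbound
          have hp := hpos p
          have hx1 : 1 ≤ (x t : ℤ) := by exact_mod_cast Nat.one_le_iff_ne_zero.mpr hxt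
          nlinarith [hp, hbound, hx1, (Nat.cast_nonneg (N.Pre p t) : (0:ℤ) ≤ N.Pre p t)]
      -- fire t and recurse
      set x' : T → ℕ := Function.update x t (x t - 1) with hx'
      have hx'sum : (∑ u, x' u) = n - 1 := by
        rw [hx', Finset.sum_update_of_mem (Finset.mem_univ t)]
        rw [← hsum, ← Finset.add_sum_erase _ x (Finset.mem_univ t),
          Finset.sdiff_singleton_eq_erase]
        have h1 : 1 ≤ x t := Nat.one_le_iff_ne_zero.mpr hxt
        omega
      have hx'supp : ∀ u, x' u ≠ 0 → u ∈ TI := by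
        intro u hu
        by_cases hut : u = t
        · subst hut; exact htTI
        · rw [hx', Function.update_of_ne hut] at hu
          exact hsupp u hu
      have hx'cast : ∀ u, (x' u : ℤ) = (x u : ℤ) - if u = t then 1 else 0 := by
        intro u
        by_cases hut : u = t
        · subst hut
          rw [hx', Function.update_self]
          have : 1 ≤ x u := Nat.one_le_iff_ne_zero.mpr hxt
          push_cast [this]
          simp
        · rw [hx', Function.update_of_ne hut]
          simp [hut]
      have hx'pos : ∀ p, 0 ≤ ((N.fire m t p : ℤ)) + ∑ u, (x' u : ℤ) * N.inc p u := by
        intro p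
        rw [fire_cast hen p]
        have hsplit : ∑ u, (x' u : ℤ) * N.inc p u
            = (∑ u, (x u : ℤ) * N.inc p u) - N.inc p t := by
          simp only [hx'cast, sub_mul]
          rw [Finset.sum_sub_distrib]
          simp [ite_mul, Finset.sum_ite_eq']
        rw [hsplit]
        have := hpos p
        linarith
      obtain ⟨w', m', hw'TI, hw'par, hw'fs⟩ := ih (n - 1) (by omega) x' hx'sum hx'supp
        (N.fire m t) hx'pos
      refine ⟨t :: w', m', ?_, ?_, FireSeq.cons hen hw'fs⟩
      · intro u hu
        rcases List.mem_cons.mp hu with h | h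
        · subst h; exact htTI
        · exact hw'TI u h
      · funext u
        rw [parikh_cons, hw'par]
        by_cases hut : u = t
        · subst hut
          rw [hx', Function.update_self]
          have : 1 ≤ x u := Nat.one_le_iff_ne_zero.mpr hxt
          simp
          omega
        · rw [hx', Function.update_of_ne hut]
          simp [hut]

lemma marking_eq_of_cast {m m' : P → ℕ} (h : ∀ p, (m p : ℤ) = (m' p : ℤ)) : m = m' :=
  funext fun p => by exact_mod_cast h p

/-- Soundness: every BRG path is simulated by a firing sequence with the same explicit
projection. -/
lemma brg_sound [Fintype T] [DecidableEq T] {N : PetriNet P T} (l : T → A) (AL AH : Set A)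
    [DecidablePred fun t => l t ∈ AL] (hdisj : Disjoint AL AH) :
    ∀ {σ : List (T × (T → ℕ))} {m mb : P → ℕ},
      BrgPath N {t | l t ∈ AL} {t | l t ∈ AH} m σ mb →
      ∃ s m', N.FireSeq m s m' ∧ s.filter (fun t => decide (l t ∈ AL)) = phi σ := by
  intro σ m mb h
  induction h with
  | nil m => exact ⟨[], m, FireSeq.nil m, rfl⟩
  | @cons m m' m'' t y σ htE hy harc _ ih =>
      obtain ⟨s2, m2, hfs2, hfil2⟩ := ih
      obtain ⟨w, hwexp, hwpar⟩ := hy.1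
      obtain ⟨hwTI, m1, hwfs, hwen⟩ := hwexp
      have hfire : N.fire m1 t = m' := by
        apply marking_eq_of_cast
        intro p
        rw [fire_cast hwen p, fireSeq_stateEq hwfs p, harc p, hwpar]
      have hfs : N.FireSeq m (w ++ t :: s2) m2 := by
        apply fireSeq_append hwfs
        exact FireSeq.cons hwen (hfire ▸ hfs2)
      refine ⟨w ++ t :: s2, m2, hfs, ?_⟩
      rw [List.filter_append, List.filter_cons]
      have hwnil : w.filter (fun t => decide (l t ∈ AL)) = [] := by
        rw [List.filter_eq_nil_iff]
        intro u hu
        simpa using Set.disjoint_right.mp hdisj (hwTI u hu)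
      rw [hwnil]
      have hdec : (decide (l t ∈ AL)) = true := decide_eq_true htE
      rw [hdec]
      simp [phi, hfil2]

/-- Completeness: every firing sequence is simulated by a BRG path with the same
explicit projection. -/
lemma brg_complete [Fintype T] [DecidableEq T] {N : PetriNet P T} (l : T → A)
    (AL AH : Set A) [DecidablePred fun t => l t ∈ AL]
    (hcover : AL ∪ AH = Set.univ) (hdisj : Disjoint AL AH)
    (hacyc : N.SubnetAcyclic {t | l t ∈ AH}) :
    ∀ (s : List T) (m mf mb : P → ℕ) (w : List T),
      N.FireSeq m s mf → (∀ u ∈ w, l u ∈ AH) → N.FireSeq mb w m →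
      ∃ σ mb', BrgPath N {t | l t ∈ AL} {t | l t ∈ AH} mb σ mb' ∧
        phi σ = s.filter (fun t => decide (l t ∈ AL)) := by
  intro s
  induction s with
  | nil =>
      intro m mf mb w _ _ _
      exact ⟨[], mb, BrgPath.nil mb, rfl⟩
  | cons t s ih =>
      intro m mf mb w hfs hwH hwfs
      cases hfs with
      | cons hen hrest =>
        by_cases hAL : l t ∈ AL
        · -- explicit transition
          have hwexp : w ∈ N.explanations {t | l t ∈ AH} mb t :=
            ⟨fun u hu => hwH u hu, m, hwfs, hen⟩
          have hwev : parikh w ∈ N.eVectors {t | l t ∈ AH} mb t := ⟨w, hwexp, rfl⟩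
          obtain ⟨y, hyev, hyle, hymin⟩ := exists_min_le (∑ u, parikh w u) (parikh w)
            rfl hwev
          have hymem : y ∈ N.eVectorsMin {t | l t ∈ AH} mb t := ⟨hyev, hymin⟩
          obtain ⟨wy, hwyexp, hwypar⟩ := hyev
          obtain ⟨hwyTI, m1, hwyfs, hwyen⟩ := hwyexp
          set mb' := N.fire m1 t with hmb'
          have harc : ∀ p, (mb' p : ℤ)
              = (mb p : ℤ) + (∑ u, (y u : ℤ) * N.inc p u) + N.inc p t := by
            intro p
            rw [hmb', fire_cast hwyen p, fireSeq_stateEq hwyfs p, hwypar]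
          -- residual vector
          set x' : T → ℕ := fun u => parikh w u - y u with hx'
          have hx'cast : ∀ u, (x' u : ℤ) = (parikh w u : ℤ) - y u := by
            intro u
            have h1 : y u ≤ parikh w u := hyle u
            simp only [hx']
            exact Nat.cast_sub h1
          have hx'supp : ∀ u, x' u ≠ 0 → u ∈ {t | l t ∈ AH} := by
            intro u hu
            have : parikh w u ≠ 0 := by
              simp only [hx'] at hu; omega
            have humem : u ∈ w := by
              by_contra hc
              exact this (by simp [parikh, List.count_eq_zero_of_not_mem hc])
            exact hwH u humem
          have hmcast : ∀ p, (m p : ℤ)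
              = (mb p : ℤ) + ∑ u, (parikh w u : ℤ) * N.inc p u :=
            fireSeq_stateEq hwfs
          have hx'sum : ∀ p, (mb' p : ℤ) + ∑ u, (x' u : ℤ) * N.inc p u
              = ((N.fire m t p : ℤ)) := by
            intro p
            rw [fire_cast hen p, harc p, hmcast p]
            simp only [hx'cast, sub_mul]
            rw [Finset.sum_sub_distrib]
            ring
          have hx'pos : ∀ p, 0 ≤ (mb' p : ℤ) + ∑ u, (x' u : ℤ) * N.inc p u := by
            intro p
            rw [hx'sum p]
            exact_mod_cast Int.ofNat_nonneg _
          obtain ⟨w2, m2', hw2TI, hw2par, hw2fs⟩ := acyclic_fireable hacyc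
            (∑ u, x' u) x' rfl hx'supp mb' hx'pos
          have hm2' : m2' = N.fire m t := by
            apply marking_eq_of_cast
            intro p
            rw [fireSeq_stateEq hw2fs p, hw2par, hx'sum p]
          obtain ⟨σ, mb'', hpath, hphi⟩ := ih (N.fire m t) mf mb' w2 hrest
            (fun u hu => hw2TI u hu) (hm2' ▸ hw2fs)
          refine ⟨(t, y) :: σ, mb'', BrgPath.cons hAL hymem harc hpath, ?_⟩
          have hdec : (decide (l t ∈ AL)) = true := decide_eq_true hAL
          rw [List.filter_cons, hdec, if_pos rfl, ← hphi]
          rfl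
        · -- implicit transition
          have hAH : l t ∈ AH := by
            have : l t ∈ AL ∪ AH := by rw [hcover]; exact Set.mem_univ _
            rcases this with h | h
            · exact absurd h hAL
            · exact h
          have hwH' : ∀ u ∈ w ++ [t], l u ∈ AH := by
            intro u hu
            rcases List.mem_append.mp hu with h | h
            · exact hwH u h
            · simp at h; subst h; exact hAH
          have hwfs' : N.FireSeq mb (w ++ [t]) (N.fire m t) :=
            fireSeq_append hwfs (FireSeq.cons hen (FireSeq.nil _))
          obtain ⟨σ, mb', hpath, hphi⟩ := ih (N.fire m t) mf mb (w ++ [t]) hrest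
            hwH' hwfs'
          refine ⟨σ, mb', hpath, ?_⟩
          rw [List.filter_cons]
          simp [hAL, hphi]

end Aux

end PetriNet

/-- For a bounded LPNS with `A = A_L ∪ A_H` and acyclic `T_H`-induced subnet,
SNNI holds iff `l(φ(L(G))) = l_L(L(N_L, m0))`. -/
theorem snni_iff_brg_label_language_eq
    {P T A : Type} [Fintype P] [Fintype T] [DecidableEq T]
    (N : PetriNet P T) (m0 : P → ℕ) (l : T → A) (AL AH : Set A)
    [DecidablePred fun t => l t ∈ AL]
    (hcover : AL ∪ AH = Set.univ) (hdisj : Disjoint AL AH)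
    (hbound : N.Bounded m0)
    (hacyc : N.SubnetAcyclic {t | l t ∈ AH}) :
    N.SNNI m0 l AL ↔
      (fun σ => (PetriNet.phi σ).map l) ''
          N.brgLang {t | l t ∈ AL} {t | l t ∈ AH} m0 =
        N.lowLabelLang l {t | l t ∈ AL} m0 := by
  have key : (fun s => (s.filter fun t => decide (l t ∈ AL)).map l) '' N.lang m0
      = (fun σ => (PetriNet.phi σ).map l) ''
          N.brgLang {t | l t ∈ AL} {t | l t ∈ AH} m0 := by
    apply Set.Subset.antisymm
    · rintro _ ⟨s, ⟨mf, hs⟩, rfl⟩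
      obtain ⟨σ, mb, hσ, hphi⟩ := PetriNet.brg_complete l AL AH hcover hdisj hacyc
        s m0 mf m0 [] hs (by simp) (PetriNet.FireSeq.nil m0)
      exact ⟨σ, ⟨mb, hσ⟩, by simp [hphi]⟩
    · rintro _ ⟨σ, ⟨mb, hσ⟩, rfl⟩
      obtain ⟨s, m', hs, hfil⟩ := PetriNet.brg_sound l AL AH hdisj hσ
      exact ⟨s, ⟨m', hs⟩, by simp [hfil]⟩
  unfold PetriNet.SNNI
  rw [key]
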